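/- arXiv:2408.05973 — 3 statements merged into one kernel-verified Lean document; each statement's English description precedes it below -/
import Mathlib

section
/- If σ : Q → P is a complete embedding of posets and G is a filter on P meeting every dense subset of P, then σ⁻¹(G) = {q ∈ Q : σ(q) ∈ G} is a filter on Q meeting every dense subset of Q. -/
/-- If `σ : Q → P` is a complete embedding and `G` is a filter on `P` meeting every dense
subset of `P`, then `σ⁻¹(G)` is a filter on `Q` meeting every dense subset of `Q`. -/
theorem complete_embedding_preimage_generic {P Q : Type*} [Preorder P] [Preorder Q]
    (σ : Q → P)
    (hmono : ∀ q q' : Q, q ≤ q' → σ q ≤ σ q')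
    (hincomp : ∀ q q' : Q, (¬ ∃ r, r ≤ q ∧ r ≤ q') → ¬ ∃ s, s ≤ σ q ∧ s ≤ σ q')
    (hred : ∀ p : P, ∃ q : Q, ∀ q', q' ≤ q → ∃ s, s ≤ σ q' ∧ s ≤ p)
    (G : Set P)
    (hup : ∀ p ∈ G, ∀ p' : P, p ≤ p' → p' ∈ G)
    (hdir : ∀ p ∈ G, ∀ p' ∈ G, ∃ r ∈ G, r ≤ p ∧ r ≤ p')
    (hgen : ∀ D : Set P, (∀ p : P, ∃ q, q ≤ p ∧ q ∈ D) → ∃ p, p ∈ G ∧ p ∈ D) :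
    (∀ q : Q, σ q ∈ G → ∀ q' : Q, q ≤ q' → σ q' ∈ G) ∧
    (∀ q : Q, σ q ∈ G → ∀ q' : Q, σ q' ∈ G → ∃ r : Q, σ r ∈ G ∧ r ≤ q ∧ r ≤ q') ∧
    (∀ D : Set Q, (∀ q : Q, ∃ q', q' ≤ q ∧ q' ∈ D) → ∃ q, σ q ∈ G ∧ q ∈ D) := by
  -- genericity first
  have gen : ∀ D : Set Q, (∀ q : Q, ∃ q', q' ≤ q ∧ q' ∈ D) → ∃ q, σ q ∈ G ∧ q ∈ D := by
    intro D hD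
    have hdense : ∀ p : P, ∃ s, s ≤ p ∧ s ∈ {p : P | ∃ q ∈ D, p ≤ σ q} := by
      intro p
      obtain ⟨q, hq⟩ := hred p
      obtain ⟨q', hq'le, hq'D⟩ := hD q
      obtain ⟨s, hs1, hs2⟩ := hq q' hq'le
      exact ⟨s, hs2, q', hq'D, hs1⟩
    obtain ⟨p, hpG, q, hqD, hple⟩ := hgen _ hdense
    exact ⟨q, hup p hpG _ hple, hqD⟩
  refine ⟨fun q hq q' hle => hup _ hq _ (hmono _ _ hle), ?_, gen⟩
  intro q hq q' hq'
  set D : Set Q := {r | (r ≤ q ∧ r ≤ q') ∨ (¬ ∃ s, s ≤ r ∧ s ≤ q) ∨ (¬ ∃ s, s ≤ r ∧ s ≤ q')}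
    with hDdef
  have hdense : ∀ t : Q, ∃ r, r ≤ t ∧ r ∈ D := by
    intro t
    by_cases h1 : ∃ s, s ≤ t ∧ s ≤ q
    · obtain ⟨s, hst, hsq⟩ := h1
      by_cases h2 : ∃ u, u ≤ s ∧ u ≤ q'
      · obtain ⟨u, hus, huq'⟩ := h2
        exact ⟨u, hus.trans hst, Or.inl ⟨hus.trans hsq, huq'⟩⟩
      · exact ⟨s, hst, Or.inr (Or.inr h2)⟩
    · exact ⟨t, le_refl t, Or.inr (Or.inl h1)⟩
  obtain ⟨r, hrG, hrD⟩ := gen D hdense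
  rcases hrD with h | h | h
  · exact ⟨r, hrG, h⟩
  · exact absurd (let ⟨s, hsG, h1, h2⟩ := hdir _ hrG _ hq; ⟨s, h1, h2⟩) (hincomp _ _ h)
  · exact absurd (let ⟨s, hsG, h1, h2⟩ := hdir _ hrG _ hq'; ⟨s, h1, h2⟩) (hincomp _ _ h)
end

section
/- In a Σ-Prikry poset (P, ℓ) admitting the strong Prikry property, suppose κ_n-directed-closedness of the direct extension order ≤* below conditions of length ≥ n. Then for any condition p with ℓ(p) = m, any family ⟨D_β : β < γ⟩ of dense open subsets of P with γ < κ_m, there is q ≤* p such that for every β < γ there is k_β < ω with {r ≤ q : ℓ(r) ≥ ℓ(q) + k_β} ⊆ D_β. -/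
universe u

namespace SPAux

variable {P : Type u} [Preorder P]

/-- Invariant for the recursively constructed sequence: the value `x` at stage `β`
is a direct extension of `p`, lies below all earlier values, and captures `D β`. -/
def Inv (ℓ : P → ℕ) (p : P) {ι : Type u} (D : ι → Set P) (rel : ι → ι → Prop)
    (β : ι) (g : ∀ α, rel α β → P) (x : P) : Prop :=
  (x ≤ p ∧ ℓ x = ℓ p) ∧ (∀ α (hα : rel α β), x ≤ g α hα) ∧
    ∃ k, ∀ s, s ≤ x → ℓ x + k ≤ ℓ s → s ∈ D β

open Classical in
noncomputable def step (ℓ : P → ℕ) (p : P) {ι : Type u} (D : ι → Set P)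
    (rel : ι → ι → Prop) (β : ι) (g : ∀ α, rel α β → P) : P :=
  if h : ∃ x, Inv ℓ p D rel β g x then h.choose else p

noncomputable def seq (ℓ : P → ℕ) (p : P) {ι : Type u} (D : ι → Set P)
    (rel : ι → ι → Prop) (wf : WellFounded rel) : ι → P :=
  wf.fix (step ℓ p D rel)

theorem seq_eq (ℓ : P → ℕ) (p : P) {ι : Type u} (D : ι → Set P)
    (rel : ι → ι → Prop) (wf : WellFounded rel) (β : ι) :
    seq ℓ p D rel wf β = step ℓ p D rel β (fun α _ => seq ℓ p D rel wf α) :=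
  wf.fix_eq _ β

end SPAux

/-- In a `Σ`-Prikry-style graded poset whose direct-extension orders are `κ n`-directed-closed
and which has the strong Prikry property, for every condition `p` and every family of fewer
than `κ (ℓ p)` dense open sets there is a direct extension `q ≤* p` handling all of them:
for each set `D β` some `k β < ω` works, i.e. `P^q_{≥ k β} ⊆ D β`. -/
theorem sigmaPrikry_simultaneous_strong_prikry {P : Type u} [Preorder P] (ℓ : P → ℕ)
    (κ : ℕ → Cardinal.{u})
    (hκmono : Monotone κ)
    (hκreg : ∀ n, (κ n).IsRegular)
    (hκunc : ∀ n, Cardinal.aleph0 < κ n)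
    (hgrade : ∀ q p : P, q ≤ p → ℓ p ≤ ℓ q)
    (hsucc : ∀ p : P, ∃ q, q ≤ p ∧ ℓ q = ℓ p + 1)
    (hclosed : ∀ (p : P) (S : Set P),
      (∀ q ∈ S, q ≤ p ∧ ℓ q = ℓ p) →
      (∀ q ∈ S, ∀ q' ∈ S, ∃ r, (r ≤ p ∧ ℓ r = ℓ p) ∧ r ≤ q ∧ r ≤ q') →
      Cardinal.mk S < κ (ℓ p) →
      ∃ r, (r ≤ p ∧ ℓ r = ℓ p) ∧ ∀ q ∈ S, r ≤ q)
    (hSPP : ∀ D : Set P, (∀ s ∈ D, ∀ t : P, t ≤ s → t ∈ D) →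
      (∀ r : P, ∃ q, q ≤ r ∧ q ∈ D) →
      ∀ r : P, ∃ q n, (q ≤ r ∧ ℓ q = ℓ r) ∧ ∀ s : P, s ≤ q → ℓ q + n ≤ ℓ s → s ∈ D)
    (p : P) {ι : Type u} (hι : Cardinal.mk ι < κ (ℓ p))
    (D : ι → Set P)
    (hDopen : ∀ β : ι, ∀ s ∈ D β, ∀ t : P, t ≤ s → t ∈ D β)
    (hDdense : ∀ β : ι, ∀ r : P, ∃ q, q ≤ r ∧ q ∈ D β) :
    ∃ q, (q ≤ p ∧ ℓ q = ℓ p) ∧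
      ∀ β : ι, ∃ k : ℕ, ∀ r : P, r ≤ q → ℓ q + k ≤ ℓ r → r ∈ D β := by
  classical
  let rel : ι → ι → Prop := WellOrderingRel
  haveI : IsWellOrder ι rel := WellOrderingRel.isWellOrder
  have wf : WellFounded rel := IsWellFounded.wf
  set f : ι → P := SPAux.seq ℓ p D rel wf with hf
  have key : ∀ β, SPAux.Inv ℓ p D rel β (fun α _ => f α) (f β) := by
    intro β
    induction β using wf.induction with
    | _ β IH =>
      have hex : ∃ x, SPAux.Inv ℓ p D rel β (fun α _ => f α) x := by
        have hmem : ∀ q ∈ f '' {α | rel α β}, q ≤ p ∧ ℓ q = ℓ p := by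
          rintro _ ⟨α, hα, rfl⟩
          exact (IH α hα).1
        have hdir : ∀ q ∈ f '' {α | rel α β}, ∀ q' ∈ f '' {α | rel α β},
            ∃ r, (r ≤ p ∧ ℓ r = ℓ p) ∧ r ≤ q ∧ r ≤ q' := by
          rintro _ ⟨α1, h1, rfl⟩ _ ⟨α2, h2, rfl⟩
          rcases trichotomous_of rel α1 α2 with h | h | h
          · exact ⟨f α2, (IH α2 h2).1, (IH α2 h2).2.1 α1 h, le_refl _⟩
          · subst h; exact ⟨f α1, (IH α1 h1).1, le_refl _, le_refl _⟩
          · exact ⟨f α1, (IH α1 h1).1, le_refl _, (IH α1 h1).2.1 α2 h⟩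
        have hcard : Cardinal.mk (f '' {α | rel α β}) < κ (ℓ p) :=
          (Cardinal.mk_image_le.trans (Cardinal.mk_set_le _)).trans_lt hι
        obtain ⟨w, hw, hwlb⟩ := hclosed p (f '' {α | rel α β}) hmem hdir hcard
        obtain ⟨q, n, ⟨hqw, hql⟩, hq⟩ := hSPP (D β) (hDopen β) (hDdense β) w
        refine ⟨q, ⟨hqw.trans hw.1, hql.trans hw.2⟩, ?_, n, hq⟩
        intro α hα
        exact hqw.trans (hwlb _ ⟨α, hα, rfl⟩)
      have hstep : f β = SPAux.step ℓ p D rel β (fun α _ => f α) :=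
        SPAux.seq_eq ℓ p D rel wf β
      rw [hstep, SPAux.step, dif_pos hex]
      exact hex.choose_spec
  have hmem : ∀ q ∈ Set.range f, q ≤ p ∧ ℓ q = ℓ p := by
    rintro _ ⟨β, rfl⟩; exact (key β).1
  have hdir : ∀ q ∈ Set.range f, ∀ q' ∈ Set.range f,
      ∃ r, (r ≤ p ∧ ℓ r = ℓ p) ∧ r ≤ q ∧ r ≤ q' := by
    rintro _ ⟨β1, rfl⟩ _ ⟨β2, rfl⟩
    rcases trichotomous_of rel β1 β2 with h | h | h
    · exact ⟨f β2, (key β2).1, (key β2).2.1 β1 h, le_refl _⟩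
    · subst h; exact ⟨f β1, (key β1).1, le_refl _, le_refl _⟩
    · exact ⟨f β1, (key β1).1, le_refl _, (key β1).2.1 β2 h⟩
  have hcard : Cardinal.mk (Set.range f) < κ (ℓ p) :=
    Cardinal.mk_range_le.trans_lt hι
  obtain ⟨q, hq, hqlb⟩ := hclosed p (Set.range f) hmem hdir hcard
  refine ⟨q, hq, fun β => ?_⟩
  obtain ⟨k, hk⟩ := (key β).2.2
  refine ⟨k, fun r hr hlr => hk r (hr.trans (hqlb _ ⟨β, rfl⟩)) ?_⟩
  rw [(key β).1.2, ← hq.2]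
  exact hlr
end

section
/- Let (P, ℓ) be a graded poset satisfying the Complete Prikry Property for 0-open sets, and suppose for each p the direct-extension order ≤* below p is σ-closed (countably closed). Then (P, ℓ) satisfies the Prikry property: for every 0-open set U ⊆ P and every p ∈ P there is q ≤* p such that for every n < ω, either P^q_n ∩ U = ∅ or P^q_n ⊆ U. -/
/-- The Complete Prikry Property plus σ-closedness of the direct extension order implies
the Prikry property: for every `0`-open `U` and every `p` there is a single direct
extension `q ≤* p` such that for every `n`, either `P^q_n ∩ U = ∅` or `P^q_n ⊆ U`. -/
theorem prikry_property_of_cpp {P : Type*} [Preorder P] (ℓ : P → ℕ)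
    (hsurj : Function.Surjective ℓ)
    (hgrade : ∀ q p : P, q ≤ p → ℓ p ≤ ℓ q)
    (hsucc : ∀ p : P, ∃ q, q ≤ p ∧ ℓ q = ℓ p + 1)
    (hσ : ∀ f : ℕ → P, (∀ n, f (n + 1) ≤ f n ∧ ℓ (f (n + 1)) = ℓ (f n)) →
      ∃ q, ∀ n, q ≤ f n ∧ ℓ q = ℓ (f n))
    (hCPP : ∀ U : Set P, (∀ r : P, r ∈ U ↔ ∀ r', r' ≤ r → ℓ r' = ℓ r → r' ∈ U) →
      ∀ p : P, ∀ n : ℕ, ∃ q, (q ≤ p ∧ ℓ q = ℓ p) ∧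
        ((∀ r, r ≤ q → ℓ r = ℓ q + n → r ∉ U) ∨ (∀ r, r ≤ q → ℓ r = ℓ q + n → r ∈ U)))
    (U : Set P) (hU : ∀ r : P, r ∈ U ↔ ∀ r', r' ≤ r → ℓ r' = ℓ r → r' ∈ U)
    (p : P) :
    ∃ q, (q ≤ p ∧ ℓ q = ℓ p) ∧ ∀ n : ℕ,
      (∀ r, r ≤ q → ℓ r = ℓ q + n → r ∉ U) ∨ (∀ r, r ≤ q → ℓ r = ℓ q + n → r ∈ U) := by
  choose g hg hdec using hCPP U hU
  set f : ℕ → P := fun n => Nat.rec p (fun n q => g q n) n with hf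
  have hstep : ∀ n, f (n + 1) = g (f n) n := fun n => rfl
  have hmono : ∀ n, f (n + 1) ≤ f n ∧ ℓ (f (n + 1)) = ℓ (f n) := fun n => hg (f n) n
  obtain ⟨q, hq⟩ := hσ f hmono
  refine ⟨q, ⟨(hq 0).1, (hq 0).2⟩, fun n => ?_⟩
  have hqn : q ≤ f (n + 1) := (hq (n + 1)).1
  have hql : ℓ q = ℓ (f (n + 1)) := (hq (n + 1)).2
  rcases hdec (f n) n with h | h
  · left
    intro r hr hlr
    exact h r (le_trans hr (hstep n ▸ hqn)) (by rw [← hstep n, ← hql, hlr])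
  · right
    intro r hr hlr
    exact h r (le_trans hr (hstep n ▸ hqn)) (by rw [← hstep n, ← hql, hlr])
end
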